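/- arXiv:2511.14127 — 4 statements merged into one kernel-verified Lean document; each statement's English description precedes it below -/
import Mathlib

section
/- Let X and Z be {0,1}-valued random variables and Y, W be {0,1}^{t-1}-valued random variables with t ≥ 1, such that X is independent of (Z,W), Z is independent of (X,Y), and both (X,Y) and (Z,W) are distributed as the product distribution U_γ^t (each coordinate independently 1 with probability γ) for some γ ∈ (0,1) with γ ≠ 1/2. Then for any integer q ≥ 2, the probability that X + |Y| ≡ Z + |W| (mod q) is strictly less than 1, where |Y| denotes the Hamming weight of Y. -/
/-!
Suppose the event had probability one, and let `ω` be a primitive `q`-th root of unity and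
`c = 1 - γ + γω` the value of `E ω^B` for a `γ`-biased bit `B`. Fix `x` and compute
`E[ω^(Z + |W|); X = x]` in two ways. Since `ω^(Z + |W|) = ω^(X + |Y|)` almost surely and
`(X, Y)` is a product law, it equals `P(X = x) ω^x c^(t-1)`; since `X` is independent of `(Z, W)`,
which is a product law, it equals `P(X = x) c^t`. Taking `x = 0` and `x = 1` gives
`ω c^(t-1) = c^(t-1)`, and `c ≠ 0` since `γ ≠ 1/2` (`c = 0` would force `γ = |γ - 1|`),
so `ω = 1`, contradicting `q ≥ 2`.
-/
open Finset

theorem sum_prod_ite_mul_pow_card_filter {ι R : Type*} [Fintype ι] [DecidableEq ι]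
    [CommSemiring R] (a b ν : R) :
    ∑ v : ι → Bool, (∏ j, if v j then a else b) * ν ^ #{j | v j = true}
      = (b + a * ν) ^ Fintype.card ι := by
  have hterm : ∀ v : ι → Bool, (∏ j, if v j then a else b) * ν ^ #{j | v j = true}
      = ∏ j, if v j then a * ν else b := by
    intro v
    rw [← prod_const, prod_filter, ← prod_mul_distrib]
    exact prod_congr rfl fun j _ => by cases v j <;> simp
  simp_rw [hterm, ← Fintype.prod_sum (fun _ (c : Bool) => if c then a * ν else b),
    Fintype.sum_bool, if_true, Bool.false_eq_true, if_false, prod_const, card_univ, add_comm]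

theorem eq_zero_of_sum_le_sum_filter {ι M : Type*} [Fintype ι] [AddCommGroup M]
    [PartialOrder M] [IsOrderedAddMonoid M] {f : ι → M} (hf : ∀ i, 0 ≤ f i) {p : ι → Prop}
    [DecidablePred p] (h : ∑ i, f i ≤ ∑ i with p i, f i) {i : ι} (hi : ¬ p i) :
    f i = 0 := by
  have hrest : ∑ j with ¬ p j, f j = 0 := by
    rw [← sum_filter_add_sum_filter_not univ p f, add_le_iff_nonpos_right] at h
    exact le_antisymm h (sum_nonneg fun j _ => hf j)
  exact (sum_eq_zero_iff_of_nonneg fun j _ => hf j).1 hrest i (by simpa using hi)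

theorem Complex.one_sub_add_mul_ne_zero_of_norm_eq_one {γ : ℝ} (hγ : γ ≠ 1 / 2) {ω : ℂ}
    (hω : ‖ω‖ = 1) : (1 - γ : ℂ) + γ * ω ≠ 0 := by
  intro h
  have hnorm : ‖(γ : ℂ) * ω‖ = ‖((γ - 1 : ℝ) : ℂ)‖ := by
    rw [show (γ : ℂ) * ω = ((γ - 1 : ℝ) : ℂ) by push_cast; linear_combination h]
  rw [norm_mul, hω, mul_one, Complex.norm_real, Complex.norm_real, Real.norm_eq_abs,
    Real.norm_eq_abs, abs_eq_abs] at hnorm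
  rcases hnorm with h' | h'
  · linarith
  · exact hγ (by linarith)

theorem sum_biased_mul_pow_card {R : Type*} [CommRing R] (s : ℕ) (γ ω : R) :
    ∑ v : Fin s → Bool, (∏ j, if v j then γ else 1 - γ) * ω ^ #{j | v j = true}
      = (1 - γ + γ * ω) ^ s := by
  rw [sum_prod_ite_mul_pow_card_filter, Fintype.card_fin]

section Coupling

variable {R : Type*} [CommRing R] {s : ℕ} {γ : R}
  {μ : Bool × (Fin s → Bool) × Bool × (Fin s → Bool) → R}

theorem sum_fst_eq_of_biased_law
    (hXY : ∀ x y, (∑ z, ∑ w, μ (x, y, z, w))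
      = (if x then γ else 1 - γ) * ∏ j, (if y j then γ else 1 - γ)) (x : Bool) :
    ∑ y, ∑ z, ∑ w, μ (x, y, z, w) = if x then γ else 1 - γ := by
  have := sum_biased_mul_pow_card s γ 1
  simp only [one_pow, mul_one, sub_add_cancel] at this
  simp_rw [hXY, ← mul_sum, this, mul_one]

theorem sum_mul_pow_weight_of_support {ω : R}
    (hXY : ∀ x y, (∑ z, ∑ w, μ (x, y, z, w))
      = (if x then γ else 1 - γ) * ∏ j, (if y j then γ else 1 - γ))
    (hsupp : ∀ x y z w, μ (x, y, z, w) ≠ 0 →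
      ω ^ ((if x then 1 else 0) + #{j | y j = true})
        = ω ^ ((if z then 1 else 0) + #{j | w j = true}))
    (x : Bool) :
    ∑ y, ∑ z, ∑ w, μ (x, y, z, w) * ω ^ ((if z then 1 else 0) + #{j | w j = true})
      = (if x then γ else 1 - γ) * ω ^ (if x then 1 else 0) * (1 - γ + γ * ω) ^ s := by
  have hmove : ∀ y z w, μ (x, y, z, w) * ω ^ ((if z then 1 else 0) + #{j | w j = true})
      = μ (x, y, z, w) * ω ^ ((if x then 1 else 0) + #{j | y j = true}) := by
    intro y z w
    by_cases hμ : μ (x, y, z, w) = 0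
    · simp [hμ]
    · rw [hsupp x y z w hμ]
  simp_rw [hmove, ← sum_mul, hXY, pow_add, ← sum_biased_mul_pow_card, mul_sum]
  exact sum_congr rfl fun y _ => by ring

theorem sum_mul_pow_weight_of_indep {ω : R}
    (hXZW : ∀ x z w, (∑ y, μ (x, y, z, w))
      = (∑ y, ∑ z', ∑ w', μ (x, y, z', w')) * (∑ x', ∑ y, μ (x', y, z, w)))
    (hXY : ∀ x y, (∑ z, ∑ w, μ (x, y, z, w))
      = (if x then γ else 1 - γ) * ∏ j, (if y j then γ else 1 - γ))
    (hZW : ∀ z w, (∑ x, ∑ y, μ (x, y, z, w))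
      = (if z then γ else 1 - γ) * ∏ j, (if w j then γ else 1 - γ))
    (x : Bool) :
    ∑ y, ∑ z, ∑ w, μ (x, y, z, w) * ω ^ ((if z then 1 else 0) + #{j | w j = true})
      = (if x then γ else 1 - γ) * ((1 - γ + γ * ω) * (1 - γ + γ * ω) ^ s) := by
  have hjoint : ∀ z w, ∑ y, μ (x, y, z, w)
      = (if x then γ else 1 - γ)
          * ((if z then γ else 1 - γ) * ∏ j, (if w j then γ else 1 - γ)) :=
    fun z w => by rw [hXZW, sum_fst_eq_of_biased_law hXY, hZW]
  rw [sum_comm]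
  calc ∑ z, ∑ y, ∑ w, μ (x, y, z, w) * ω ^ ((if z then 1 else 0) + #{j | w j = true})
      = ∑ z : Bool,
          (if x then γ else 1 - γ) * ((if z then γ else 1 - γ) * ω ^ (if z then 1 else 0))
            * ∑ w : Fin s → Bool,
                (∏ j, if w j then γ else 1 - γ) * ω ^ #{j | w j = true} := by
        refine sum_congr rfl fun z _ => ?_
        rw [sum_comm, mul_sum]
        refine sum_congr rfl fun w _ => ?_
        rw [← sum_mul, hjoint, pow_add]
        ring
    _ = (if x then γ else 1 - γ) * ((1 - γ + γ * ω) * (1 - γ + γ * ω) ^ s) := by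
        rw [sum_biased_mul_pow_card, ← sum_mul, ← mul_sum, Fintype.sum_bool]
        simp only [if_true, Bool.false_eq_true, if_false, pow_one, pow_zero, mul_one]
        ring

theorem eq_one_of_biased_coupling [IsDomain R] {ω : R} (hγ0 : γ ≠ 0) (hγ1 : 1 - γ ≠ 0)
    (hc : 1 - γ + γ * ω ≠ 0)
    (hXZW : ∀ x z w, (∑ y, μ (x, y, z, w))
      = (∑ y, ∑ z', ∑ w', μ (x, y, z', w')) * (∑ x', ∑ y, μ (x', y, z, w)))
    (hXY : ∀ x y, (∑ z, ∑ w, μ (x, y, z, w))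
      = (if x then γ else 1 - γ) * ∏ j, (if y j then γ else 1 - γ))
    (hZW : ∀ z w, (∑ x, ∑ y, μ (x, y, z, w))
      = (if z then γ else 1 - γ) * ∏ j, (if w j then γ else 1 - γ))
    (hsupp : ∀ x y z w, μ (x, y, z, w) ≠ 0 →
      ω ^ ((if x then 1 else 0) + #{j | y j = true})
        = ω ^ ((if z then 1 else 0) + #{j | w j = true})) :
    ω = 1 := by
  have key x := (sum_mul_pow_weight_of_support hXY hsupp x).symm.trans
    (sum_mul_pow_weight_of_indep (ω := ω) hXZW hXY hZW x)
  have hfalse := key false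
  have htrue := key true
  simp only [if_true, Bool.false_eq_true, if_false, pow_one, pow_zero, mul_one, mul_assoc]
    at hfalse htrue
  have hcfalse := mul_left_cancel₀ hγ1 hfalse
  have hctrue := mul_left_cancel₀ hγ0 htrue
  exact mul_right_cancel₀ (pow_ne_zero s hc) <| by linear_combination hctrue - hcfalse

end Coupling

theorem stmt2_general (s : ℕ) (γ : ℝ) (hγ0 : 0 < γ) (hγ1 : γ < 1) (hγ : γ ≠ 1/2)
    (q : ℕ) (hq : 2 ≤ q)
    (μ : Bool × (Fin s → Bool) × Bool × (Fin s → Bool) → ℝ)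
    (hnn : ∀ p, 0 ≤ μ p) (hsum : ∑ p, μ p = 1)
    -- X is independent of (Z, W)
    (hXZW : ∀ x z w, (∑ y, μ (x, y, z, w))
      = (∑ y, ∑ z', ∑ w', μ (x, y, z', w')) * (∑ x', ∑ y, μ (x', y, z, w)))
    -- (X, Y) has the γ-biased product distribution
    (hXY : ∀ x y, (∑ z, ∑ w, μ (x, y, z, w))
      = (if x then γ else 1 - γ) * ∏ j, (if y j then γ else 1 - γ))
    -- (Z, W) has the γ-biased product distribution
    (hZW : ∀ z w, (∑ x, ∑ y, μ (x, y, z, w))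
      = (if z then γ else 1 - γ) * ∏ j, (if w j then γ else 1 - γ)) :
    ∑ p ∈ Finset.univ.filter
        (fun p : Bool × (Fin s → Bool) × Bool × (Fin s → Bool) =>
          ((if p.1 then 1 else 0) + (Finset.univ.filter (fun j => p.2.1 j = true)).card) % q
            = ((if p.2.2.1 then 1 else 0)
                + (Finset.univ.filter (fun j => p.2.2.2 j = true)).card) % q),
      μ p < 1 := by
  obtain ⟨ω, hω⟩ : ∃ ω : ℂ, IsPrimitiveRoot ω q :=
    ⟨_, Complex.isPrimitiveRoot_exp q (by omega)⟩
  by_contra! hcon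
  have hsupp : ∀ x y z w, (μ (x, y, z, w) : ℂ) ≠ 0 →
      ω ^ ((if x then 1 else 0) + #{j | y j = true})
        = ω ^ ((if z then 1 else 0) + #{j | w j = true}) := by
    intro x y z w hμ
    have hmod := not_not.1 fun h => hμ <|
      by exact_mod_cast eq_zero_of_sum_le_sum_filter hnn (hsum ▸ hcon) (i := (x, y, z, w)) h
    rw [pow_eq_pow_mod _ hω.pow_eq_one, pow_eq_pow_mod (_ + #_) hω.pow_eq_one, hmod]
  have hXZWc : ∀ x z w, (∑ y, (μ (x, y, z, w) : ℂ))
      = (∑ y, ∑ z', ∑ w', (μ (x, y, z', w') : ℂ))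
          * (∑ x', ∑ y, (μ (x', y, z, w) : ℂ)) :=
    fun x z w => by exact_mod_cast hXZW x z w
  have hXYc : ∀ x y, (∑ z, ∑ w, (μ (x, y, z, w) : ℂ))
      = (if x then (γ : ℂ) else 1 - γ) * ∏ j, (if y j then (γ : ℂ) else 1 - γ) :=
    fun x y => by
      simpa [apply_ite ((↑) : ℝ → ℂ)] using congrArg ((↑) : ℝ → ℂ) (hXY x y)
  have hZWc : ∀ z w, (∑ x, ∑ y, (μ (x, y, z, w) : ℂ))
      = (if z then (γ : ℂ) else 1 - γ) * ∏ j, (if w j then (γ : ℂ) else 1 - γ) :=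
    fun z w => by
      simpa [apply_ite ((↑) : ℝ → ℂ)] using congrArg ((↑) : ℝ → ℂ) (hZW z w)
  refine hω.ne_one (by omega) (eq_one_of_biased_coupling (μ := fun p ↦ (μ p : ℂ))
    (by exact_mod_cast hγ0.ne') (by exact_mod_cast (sub_pos.2 hγ1).ne')
    (Complex.one_sub_add_mul_ne_zero_of_norm_eq_one hγ (hω.norm'_eq_one (by omega)))
    hXZWc hXYc hZWc hsupp)

/-- Anticoncentration after coupling, biased case `γ ≠ 1/2`, any modulus `q ≥ 2`. -/
theorem stmt2 (s : ℕ) (γ : ℝ) (hγ0 : 0 < γ) (hγ1 : γ < 1) (hγ : γ ≠ 1/2)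
    (q : ℕ) (hq : 2 ≤ q)
    (μ : Bool × (Fin s → Bool) × Bool × (Fin s → Bool) → ℝ)
    (hnn : ∀ p, 0 ≤ μ p) (hsum : ∑ p, μ p = 1)
    -- X is independent of (Z, W)
    (hXZW : ∀ x z w, (∑ y, μ (x, y, z, w))
      = (∑ y, ∑ z', ∑ w', μ (x, y, z', w')) * (∑ x', ∑ y, μ (x', y, z, w)))
    -- Z is independent of (X, Y)
    (hZXY : ∀ x y z, (∑ w, μ (x, y, z, w))
      = (∑ z', ∑ w, μ (x, y, z', w)) * (∑ x', ∑ y', ∑ w, μ (x', y', z, w)))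
    -- (X, Y) has the γ-biased product distribution
    (hXY : ∀ x y, (∑ z, ∑ w, μ (x, y, z, w))
      = (if x then γ else 1 - γ) * ∏ j, (if y j then γ else 1 - γ))
    -- (Z, W) has the γ-biased product distribution
    (hZW : ∀ z w, (∑ x, ∑ y, μ (x, y, z, w))
      = (if z then γ else 1 - γ) * ∏ j, (if w j then γ else 1 - γ)) :
    ∑ p ∈ Finset.univ.filter
        (fun p : Bool × (Fin s → Bool) × Bool × (Fin s → Bool) =>
          ((if p.1 then 1 else 0) + (Finset.univ.filter (fun j => p.2.1 j = true)).card) % q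
            = ((if p.2.2.1 then 1 else 0)
                + (Finset.univ.filter (fun j => p.2.2.2 j = true)).card) % q),
      μ p < 1 :=
  stmt2_general s γ hγ0 hγ1 hγ q hq μ hnn hsum hXZW hXY hZW
end

section
/- Let X and Z be {0,1}-valued random variables and Y, W be {0,1}^{t-1}-valued random variables, such that X is independent of (Z,W), Z is independent of (X,Y), and both (X,Y) and (Z,W) are distributed as U_{1/2}^t. Then for any integer q ≥ min(3, t+1), the probability that X + |Y| ≡ Z + |W| (mod q) is strictly less than 1. -/
open Finset

def wt {n : ℕ} (y : Fin n → Bool) : ℕ := (Finset.univ.filter (fun j => y j = true)).card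

lemma wt_cons (n : ℕ) (b : Bool) (y : Fin n → Bool) :
    wt (Fin.cons b y : Fin (n+1) → Bool) = (if b then 1 else 0) + wt y := by
  unfold wt
  rw [Finset.card_filter, Finset.card_filter, Fin.sum_univ_succ]
  simp

lemma sum_pow_wt (n : ℕ) (x : ℂ) : ∑ y : Fin n → Bool, x ^ wt y = (1 + x) ^ n := by
  induction n with
  | zero => simp [wt]
  | succ n ih =>
    have e := Fintype.sum_equiv (Fin.consEquiv (fun _ : Fin (n+1) => Bool))
      (fun p : Bool × (Fin n → Bool) => x ^ ((if p.1 then 1 else 0) + wt p.2))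
      (fun y : Fin (n+1) → Bool => x ^ wt y)
      (by intro p; simp only [Fin.consEquiv, Equiv.coe_fn_mk, wt_cons])
    rw [← e, Fintype.sum_prod_type, pow_succ]
    simp only [Fintype.sum_bool, if_true, if_false, pow_add, pow_zero, pow_one, one_mul]
    rw [← Finset.mul_sum, ih]
    simp only [if_neg (by decide : ¬ (false = true)), pow_zero, one_mul, ih]
    ring

/-- Anticoncentration after coupling, unbiased case `γ = 1/2`, modulus `q ≥ min(3, t+1)`
where `t = s + 1`. -/
theorem stmt3 (s : ℕ) (q : ℕ) (hq : min 3 (s + 2) ≤ q)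
    (μ : Bool × (Fin s → Bool) × Bool × (Fin s → Bool) → ℝ)
    (hnn : ∀ p, 0 ≤ μ p) (hsum : ∑ p, μ p = 1)
    -- X is independent of (Z, W)
    (hXZW : ∀ x z w, (∑ y, μ (x, y, z, w))
      = (∑ y, ∑ z', ∑ w', μ (x, y, z', w')) * (∑ x', ∑ y, μ (x', y, z, w)))
    -- Z is independent of (X, Y)
    (hZXY : ∀ x y z, (∑ w, μ (x, y, z, w))
      = (∑ z', ∑ w, μ (x, y, z', w)) * (∑ x', ∑ y', ∑ w, μ (x', y', z, w)))
    -- (X, Y) is uniform on {0,1}^t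
    (hXY : ∀ x y, (∑ z, ∑ w, μ (x, y, z, w)) = (1 / 2 : ℝ) ^ (s + 1))
    -- (Z, W) is uniform on {0,1}^t
    (hZW : ∀ z w, (∑ x, ∑ y, μ (x, y, z, w)) = (1 / 2 : ℝ) ^ (s + 1)) :
    ∑ p ∈ Finset.univ.filter
        (fun p : Bool × (Fin s → Bool) × Bool × (Fin s → Bool) =>
          ((if p.1 then 1 else 0) + (Finset.univ.filter (fun j => p.2.1 j = true)).card) % q
            = ((if p.2.2.1 then 1 else 0)
                + (Finset.univ.filter (fun j => p.2.2.2 j = true)).card) % q),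
      μ p < 1 := by
  show ∑ p ∈ Finset.univ.filter
        (fun p : Bool × (Fin s → Bool) × Bool × (Fin s → Bool) =>
          ((if p.1 then 1 else 0) + wt p.2.1) % q
            = ((if p.2.2.1 then 1 else 0) + wt p.2.2.2) % q),
      μ p < 1
  by_contra hcon
  push_neg at hcon
  have hq2 : 2 ≤ q := le_trans (by omega) hq
  have hq0 : 0 < q := by omega
  -- basic power fact
  have hpow : (2:ℝ)^s * (1/2:ℝ)^(s+1) = 1/2 := by
    rw [pow_succ, ← mul_assoc, ← mul_pow]
    norm_num
  have hcard : (Finset.univ : Finset (Fin s → Bool)).card = 2 ^ s := by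
    simp [Finset.card_univ]
  -- step B : ∑_y μ (x,y,z,w) = (1/2)^(s+2)
  have stepB : ∀ x z w, (∑ y, μ (x, y, z, w)) = (1/2:ℝ)^(s+2) := by
    intro x z w
    rw [hXZW x z w, hZW z w]
    have h1 : (∑ y, ∑ z', ∑ w', μ (x, y, z', w')) = 1/2 := by
      rw [Finset.sum_congr rfl (fun y _ => hXY x y), Finset.sum_const, hcard,
        nsmul_eq_mul]
      push_cast
      exact hpow
    rw [h1, pow_succ]
    ring
  -- vanishing off the diagonal event
  have hvan : ∀ x y z w,
      ((if x then 1 else 0) + wt y) % q ≠ ((if z then 1 else 0) + wt w) % q →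
      μ (x, y, z, w) = 0 := by
    have h1 := Finset.sum_filter_add_sum_filter_not Finset.univ
      (fun p : Bool × (Fin s → Bool) × Bool × (Fin s → Bool) =>
        ((if p.1 then 1 else 0) + wt p.2.1) % q
          = ((if p.2.2.1 then 1 else 0) + wt p.2.2.2) % q) μ
    rw [hsum] at h1
    have h2 : ∑ p ∈ Finset.univ.filter
        (fun p : Bool × (Fin s → Bool) × Bool × (Fin s → Bool) =>
          ¬ (((if p.1 then 1 else 0) + wt p.2.1) % q
            = ((if p.2.2.1 then 1 else 0) + wt p.2.2.2) % q)), μ p = 0 := by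
      have h3 : (0:ℝ) ≤ ∑ p ∈ Finset.univ.filter
          (fun p : Bool × (Fin s → Bool) × Bool × (Fin s → Bool) =>
            ¬ (((if p.1 then 1 else 0) + wt p.2.1) % q
              = ((if p.2.2.1 then 1 else 0) + wt p.2.2.2) % q)), μ p :=
        Finset.sum_nonneg fun p _ => hnn p
      linarith
    intro x y z w hne
    have := (Finset.sum_eq_zero_iff_of_nonneg (fun p _ => hnn p)).mp h2 (x, y, z, w)
      (Finset.mem_filter.mpr ⟨Finset.mem_univ _, hne⟩)
    exact this
  -- the counting identity
  have hcount : ∀ a : ℕ,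
      (Finset.univ.filter (fun y : Fin s → Bool => wt y % q = a)).card
        = (Finset.univ.filter (fun y : Fin s → Bool => (1 + wt y) % q = a)).card := by
    intro a
    have key : ∀ x : Bool,
        ((1:ℝ)/2)^(s+2) * (∑ z : Bool, ∑ w : Fin s → Bool,
            if ((if z then 1 else 0) + wt w) % q = a then (1:ℝ) else 0)
          = (1/2:ℝ)^(s+1) * ∑ y : Fin s → Bool,
            (if ((if x then 1 else 0) + wt y) % q = a then (1:ℝ) else 0) := by
      intro x
      calc ((1:ℝ)/2)^(s+2) * (∑ z : Bool, ∑ w : Fin s → Bool,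
            if ((if z then 1 else 0) + wt w) % q = a then (1:ℝ) else 0)
          = ∑ z : Bool, ∑ w : Fin s → Bool,
            (if ((if z then 1 else 0) + wt w) % q = a then ((1:ℝ)/2)^(s+2) else 0) := by
            rw [Finset.mul_sum]
            refine Finset.sum_congr rfl fun z _ => ?_
            rw [Finset.mul_sum]
            refine Finset.sum_congr rfl fun w _ => ?_
            rw [mul_ite, mul_one, mul_zero]
        _ = ∑ z : Bool, ∑ w : Fin s → Bool, ∑ y : Fin s → Bool,
            (if ((if z then 1 else 0) + wt w) % q = a then μ (x, y, z, w) else 0) := by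
            refine Finset.sum_congr rfl fun z _ => Finset.sum_congr rfl fun w _ => ?_
            by_cases h : ((if z then 1 else 0) + wt w) % q = a
            · simp only [if_pos h]
              exact (stepB x z w).symm
            · simp only [if_neg h]
              simp
        _ = ∑ z : Bool, ∑ w : Fin s → Bool, ∑ y : Fin s → Bool,
            (if ((if x then 1 else 0) + wt y) % q = a then μ (x, y, z, w) else 0) := by
            refine Finset.sum_congr rfl fun z _ => Finset.sum_congr rfl fun w _ =>
              Finset.sum_congr rfl fun y _ => ?_
            by_cases h1 : ((if z then 1 else 0) + wt w) % q = a <;>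
              by_cases h2 : ((if x then 1 else 0) + wt y) % q = a
            · rw [if_pos h1, if_pos h2]
            · rw [if_pos h1, if_neg h2, hvan x y z w (by rw [h1]; exact h2)]
            · rw [if_neg h1, if_pos h2, hvan x y z w (by rw [h2]; exact fun h => h1 h.symm)]
            · rw [if_neg h1, if_neg h2]
        _ = ∑ y : Fin s → Bool, ∑ z : Bool, ∑ w : Fin s → Bool,
            (if ((if x then 1 else 0) + wt y) % q = a then μ (x, y, z, w) else 0) := by
            rw [Finset.sum_congr rfl fun (z : Bool) _ => Finset.sum_comm]
            exact Finset.sum_comm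
        _ = ∑ y : Fin s → Bool,
            (if ((if x then 1 else 0) + wt y) % q = a then (1/2:ℝ)^(s+1) else 0) := by
            refine Finset.sum_congr rfl fun y _ => ?_
            by_cases h : ((if x then 1 else 0) + wt y) % q = a
            · simp only [if_pos h]
              exact hXY x y
            · simp only [if_neg h]
              simp
        _ = (1/2:ℝ)^(s+1) * ∑ y : Fin s → Bool,
            (if ((if x then 1 else 0) + wt y) % q = a then (1:ℝ) else 0) := by
            rw [Finset.mul_sum]
            refine Finset.sum_congr rfl fun y _ => ?_
            rw [mul_ite, mul_one, mul_zero]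
    have h12 : (1/2:ℝ)^(s+1) ≠ 0 := pow_ne_zero _ (by norm_num)
    have heq : ∑ y : Fin s → Bool, (if ((if false then 1 else 0) + wt y) % q = a then (1:ℝ) else 0)
        = ∑ y : Fin s → Bool, (if ((if true then 1 else 0) + wt y) % q = a then (1:ℝ) else 0) :=
      mul_left_cancel₀ h12 ((key false).symm.trans (key true))
    rw [Finset.sum_boole, Finset.sum_boole] at heq
    norm_num at heq
    exact_mod_cast heq
  -- N is constant mod q
  set N : ℕ → ℕ := fun a => (Finset.univ.filter (fun y : Fin s → Bool => wt y % q = a)).card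
    with hN
  have hcyc : ∀ a, a < q → N a = N ((a + 1) % q) := by
    intro a ha
    show (Finset.univ.filter (fun y : Fin s → Bool => wt y % q = a)).card
      = (Finset.univ.filter (fun y : Fin s → Bool => wt y % q = (a+1) % q)).card
    conv_rhs => rw [hcount ((a+1)%q)]
    congr 1
    apply Finset.filter_congr
    intro y _
    constructor
    · intro h
      have : (1 + wt y) % q = (1 + a) % q := by
        have : wt y ≡ a [MOD q] := by
          unfold Nat.ModEq; rw [h, Nat.mod_eq_of_lt ha]
        exact (Nat.ModEq.add_left 1 this)
      rwa [Nat.add_comm a 1]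
    · intro h
      rw [Nat.add_comm a 1] at h
      have h2 : (1 + wt y) ≡ (1 + a) [MOD q] := h
      have h3 : wt y ≡ a [MOD q] := Nat.ModEq.add_left_cancel' 1 h2
      rw [Nat.ModEq, Nat.mod_eq_of_lt ha] at h3
      exact h3
  have hconstAux : ∀ j : ℕ, N (j % q) = N 0 := by
    intro j
    induction j with
    | zero => rw [Nat.zero_mod]
    | succ j ih =>
      have h1 : (j + 1) % q = (j % q + 1) % q := by
        rw [Nat.add_mod j 1 q, Nat.mod_eq_of_lt (show (1:ℕ) < q by omega)]
      rw [h1, ← hcyc (j % q) (Nat.mod_lt _ hq0)]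
      exact ih
  have hconst : ∀ a, a < q → N a = N 0 := by
    intro a ha
    have := hconstAux a
    rwa [Nat.mod_eq_of_lt ha] at this
  -- total count
  have htot : q * N 0 = 2 ^ s := by
    have hfib : (Finset.univ : Finset (Fin s → Bool)).card
        = ∑ a ∈ Finset.range q, N a :=
      Finset.card_eq_sum_card_fiberwise (fun y _ => Finset.mem_range.mpr (Nat.mod_lt _ hq0))
    have : ∑ a ∈ Finset.range q, N a = ∑ a ∈ Finset.range q, N 0 :=
      Finset.sum_congr rfl fun a haa => hconst a (Finset.mem_range.mp haa)
    rw [this, Finset.sum_const, Finset.card_range, smul_eq_mul] at hfib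
    rw [← hfib, hcard]
  have hdvd : q ∣ 2 ^ s := ⟨N 0, htot.symm⟩
  -- s ≥ 1 and q ≥ 3
  have hs1 : 1 ≤ s := by
    by_contra hs
    have : s = 0 := by omega
    subst this
    have : q ∣ 1 := by simpa using hdvd
    have := Nat.le_of_dvd one_pos this
    omega
  have hq3 : 3 ≤ q := by omega
  -- q is a power of 2, divisible by 4
  obtain ⟨m, hms, rfl⟩ := (Nat.dvd_prime_pow Nat.prime_two).mp hdvd
  have hm2 : 2 ≤ m := by
    by_contra hm
    interval_cases m <;> omega
  have h4q : 4 ∣ 2 ^ m := by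
    have : (2:ℕ) ^ 2 ∣ 2 ^ m := pow_dvd_pow 2 hm2
    simpa using this
  obtain ⟨k, hk⟩ := h4q
  have hI4 : (Complex.I) ^ (2 ^ m) = 1 := by
    rw [hk, pow_mul, Complex.I_pow_four, one_pow]
  -- geometric sum vanishes
  have hgeo : ∑ a ∈ Finset.range (2 ^ m), (Complex.I) ^ a = 0 := by
    have h := geom_sum_mul Complex.I (2 ^ m)
    rw [hI4, sub_self] at h
    rcases mul_eq_zero.mp h with h' | h'
    · exact h'
    · exfalso
      have : Complex.I = 1 := by linear_combination h'
      simp [Complex.ext_iff] at this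
  -- group the complex sum by residue
  have hgroup : ∑ y : Fin s → Bool, (Complex.I) ^ (wt y)
      = ∑ a ∈ Finset.range (2 ^ m), (N a : ℂ) * (Complex.I) ^ a := by
    rw [← Finset.sum_fiberwise_of_maps_to
      (fun (y : Fin s → Bool) (_ : y ∈ Finset.univ) =>
        Finset.mem_range.mpr (Nat.mod_lt (wt y) hq0)) (fun y => (Complex.I) ^ (wt y))]
    refine Finset.sum_congr rfl fun a _ => ?_
    have : ∀ y ∈ Finset.univ.filter (fun y : Fin s → Bool => wt y % (2^m) = a),
        (Complex.I) ^ (wt y) = (Complex.I) ^ a := by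
      intro y hy
      have hy' := (Finset.mem_filter.mp hy).2
      conv_lhs => rw [← Nat.div_add_mod (wt y) (2 ^ m)]
      rw [pow_add, pow_mul, hI4, one_pow, one_mul, hy']
    rw [Finset.sum_congr rfl this, Finset.sum_const, nsmul_eq_mul]
  -- conclude
  have hfinal : ((1:ℂ) + Complex.I) ^ s = 0 := by
    rw [← sum_pow_wt s Complex.I, hgroup]
    have : ∀ a ∈ Finset.range (2 ^ m), (N a : ℂ) * (Complex.I) ^ a
        = (N 0 : ℂ) * (Complex.I) ^ a := by
      intro a haa
      rw [hconst a (Finset.mem_range.mp haa)]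
    rw [Finset.sum_congr rfl this, ← Finset.mul_sum, hgeo, mul_zero]
  have : (1:ℂ) + Complex.I ≠ 0 := by
    intro h
    simp [Complex.ext_iff] at h
  exact pow_ne_zero s this hfinal
end

section
/- For integers 0 ≤ k ≤ n with n ≥ 1 and k ∉ {0, n}, the binomial coefficient satisfies C(n,k) ≥ 2^{n·H(k/n)} / √(8k(1 − k/n)), where H is the binary entropy function H(p) = −p log₂ p − (1−p) log₂ (1−p). -/
/-!
With the Stirling sequence `s n = n! / (√(2n) (n/e)^n)` one has, for `n = k + m`,
`C(n, k) * s k * s m = 2 * s n * n^n / (k^k m^m) / √(8km/n)`,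
and `2^(n H(k/n)) = n^n / (k^k m^m)`.
So the bound is equivalent to `s k * s m ≤ 2 * s (k + m)`. Since `s` decreases to `√π` from
`s 1 = e/√2`, the product `s k * s m` is at most `s 2 ^ 2` or `s 1 * s 3`, both below `2√π`
(this is `e^8 ≤ 972π`), except in the cases `{k, m} = {1, 1}` (where equality holds) and
`{k, m} = {1, 2}`, which are checked by hand.
-/

open Real
open scoped Nat

lemma Real.exp_one_pow_eight_le : exp 1 ^ 8 ≤ 972 * π := by
  have h := pow_le_pow_left₀ (exp_pos 1).le exp_one_lt_d9.le 8
  nlinarith [pi_gt_d6]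

lemma Real.rpow_mul_entropy_logb {b x y : ℝ} (hb : 0 < b) (hb1 : b ≠ 1) (hx : 0 < x)
    (hy : 0 < y) :
    b ^ ((x + y) * (-(x / (x + y)) * logb b (x / (x + y))
        - (1 - x / (x + y)) * logb b (1 - x / (x + y)))) = (x + y) ^ (x + y) / (x ^ x * y ^ y) := by
  have hxy : 0 < x + y := by positivity
  have hexp : (x + y) * (-(x / (x + y)) * logb b (x / (x + y))
        - (1 - x / (x + y)) * logb b (1 - x / (x + y))) =
      logb b ((x + y) ^ (x + y) / (x ^ x * y ^ y)) := by
    rw [one_sub_div hxy.ne', add_sub_cancel_left, logb_div hx.ne' hxy.ne',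
      logb_div hy.ne' hxy.ne', logb_div (by positivity) (by positivity),
      logb_mul (by positivity) (by positivity), logb_rpow_eq_mul_logb_of_pos hxy,
      logb_rpow_eq_mul_logb_of_pos hx, logb_rpow_eq_mul_logb_of_pos hy]
    field_simp
    ring
  rw [hexp, rpow_logb hb hb1 (by positivity)]

lemma Real.sqrt_mul_div_pow_add_eq {a b c : ℝ} (ha : 0 < a) (hb : 0 < b) (hc : 0 < c)
    (p q : ℕ) :
    √(2 * (a + b)) * ((a + b) / c) ^ (p + q) =
      2 * ((a + b) ^ (p + q) / (a ^ p * b ^ q) / √(8 * a * b / (a + b))) *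
        (√(2 * a) * (a / c) ^ p * (√(2 * b) * (b / c) ^ q)) := by
  have h8 : √(8 * a * b / (a + b)) * √(2 * (a + b)) = 2 * (√(2 * a) * √(2 * b)) := by
    rw [← sqrt_mul (by positivity), ← sqrt_mul (by positivity),
      show 8 * a * b / (a + b) * (2 * (a + b)) = 2 ^ 2 * (2 * a * (2 * b)) by field_simp; ring,
      sqrt_mul (by positivity), sqrt_sq zero_le_two]
  have hr : 0 < √(8 * a * b / (a + b)) := sqrt_pos.mpr (by positivity)
  generalize √(8 * a * b / (a + b)) = r at h8 hr ⊢
  rw [div_pow, div_pow, div_pow, pow_add, pow_add]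
  field_simp
  linear_combination h8

namespace Stirling

lemma stirlingSeq_two : stirlingSeq 2 = exp 1 ^ 2 / 4 := by
  rw [stirlingSeq, show √(2 * ((2 : ℕ) : ℝ)) = 2 by
    rw [show (2 * ((2 : ℕ) : ℝ)) = 2 ^ 2 by norm_num, sqrt_sq zero_le_two]]
  field_simp
  norm_num [Nat.factorial]

lemma stirlingSeq_three : stirlingSeq 3 = √6 * exp 1 ^ 3 / 27 := by
  have h6 : √6 * √6 = 6 := mul_self_sqrt (by norm_num)
  rw [stirlingSeq]
  field_simp
  norm_num [Nat.factorial]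
  nlinarith [h6]

lemma stirlingSeq_le_of_le {a b : ℕ} (ha : a ≠ 0) (hab : a ≤ b) :
    stirlingSeq b ≤ stirlingSeq a := by
  obtain ⟨a, rfl⟩ := Nat.exists_eq_succ_of_ne_zero ha
  obtain ⟨b, rfl⟩ : ∃ b', b = b' + 1 := ⟨b - 1, by omega⟩
  exact stirlingSeq'_antitone (Nat.succ_le_succ_iff.mp hab)

lemma stirlingSeq_pos {n : ℕ} (hn : n ≠ 0) : 0 < stirlingSeq n := by
  obtain ⟨n, rfl⟩ := Nat.exists_eq_succ_of_ne_zero hn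
  exact stirlingSeq'_pos n

lemma stirlingSeq_two_mul_self_le : stirlingSeq 2 * stirlingSeq 2 ≤ 2 * √π := by
  rw [stirlingSeq_two]
  have := exp_one_pow_eight_le
  have hp := sq_sqrt pi_pos.le
  nlinarith [sqrt_nonneg π, exp_pos 1]

lemma stirlingSeq_one_mul_stirlingSeq_three_le : stirlingSeq 1 * stirlingSeq 3 ≤ 2 * √π := by
  rw [stirlingSeq_one, stirlingSeq_three, div_mul_div_comm, div_le_iff₀ (by positivity),
    ← pow_le_pow_iff_left₀ (by positivity) (by positivity) two_ne_zero]
  have h2 := sq_sqrt (show (0 : ℝ) ≤ 2 by norm_num)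
  have h6 := sq_sqrt (show (0 : ℝ) ≤ 6 by norm_num)
  have hp := sq_sqrt pi_pos.le
  calc (exp 1 * (√6 * exp 1 ^ 3)) ^ 2 = 6 * exp 1 ^ 8 := by rw [mul_pow, mul_pow, h6]; ring
    _ ≤ 6 * (972 * π) := by gcongr; exact exp_one_pow_eight_le
    _ = (2 * √π * (√2 * 27)) ^ 2 := by rw [mul_pow, mul_pow, mul_pow, h2, hp]; ring

lemma stirlingSeq_one_mul_stirlingSeq_two_le :
    stirlingSeq 1 * stirlingSeq 2 ≤ 2 * stirlingSeq 3 := by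
  rw [stirlingSeq_one, stirlingSeq_two, stirlingSeq_three, div_mul_div_comm,
    div_le_iff₀ (by positivity)]
  have h12 : (27 : ℝ) ≤ 8 * (√2 * √6) := by
    rw [← sqrt_mul zero_le_two, show (8 : ℝ) = √64 by
        rw [show (64 : ℝ) = 8 ^ 2 by norm_num, sqrt_sq (by norm_num)],
      ← sqrt_mul (by norm_num), le_sqrt (by norm_num) (by norm_num)]
    norm_num
  have := pow_pos (exp_pos 1) 3
  nlinarith

lemma stirlingSeq_mul_stirlingSeq_le {k m : ℕ} (hk : k ≠ 0) (hm : m ≠ 0) :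
    stirlingSeq k * stirlingSeq m ≤ 2 * stirlingSeq (k + m) := by
  wlog hkm : k ≤ m generalizing k m
  · rw [mul_comm, add_comm]
    exact this hm hk (by omega)
  have hpi : 2 * √π ≤ 2 * stirlingSeq (k + m) := by
    gcongr
    exact sqrt_pi_le_stirlingSeq (by omega)
  obtain hk2 | rfl : 2 ≤ k ∨ k = 1 := by omega
  · calc stirlingSeq k * stirlingSeq m ≤ stirlingSeq 2 * stirlingSeq 2 :=
          mul_le_mul (stirlingSeq_le_of_le two_ne_zero hk2)
            (stirlingSeq_le_of_le two_ne_zero (hk2.trans hkm))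
            (stirlingSeq_pos hm).le (stirlingSeq_pos two_ne_zero).le
      _ ≤ 2 * √π := stirlingSeq_two_mul_self_le
      _ ≤ _ := hpi
  obtain hm3 | rfl | rfl : 3 ≤ m ∨ m = 1 ∨ m = 2 := by omega
  · calc stirlingSeq 1 * stirlingSeq m ≤ stirlingSeq 1 * stirlingSeq 3 := by
          gcongr
          · exact (stirlingSeq_pos one_ne_zero).le
          · exact stirlingSeq_le_of_le three_ne_zero hm3
      _ ≤ 2 * √π := stirlingSeq_one_mul_stirlingSeq_three_le
      _ ≤ _ := hpi
  · rw [stirlingSeq_one, stirlingSeq_two, div_mul_div_comm, mul_self_sqrt zero_le_two]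
    linarith
  · exact stirlingSeq_one_mul_stirlingSeq_two_le

lemma factorial_eq_stirlingSeq_mul {n : ℕ} (hn : n ≠ 0) :
    (n ! : ℝ) = stirlingSeq n * (√(2 * n) * (n / exp 1) ^ n) := by
  rw [stirlingSeq, div_mul_cancel₀ _ (by positivity)]

lemma choose_mul_stirlingSeq_mul_stirlingSeq {k m : ℕ} (hk : k ≠ 0) (hm : m ≠ 0) :
    ((k + m).choose k : ℝ) * (stirlingSeq k * stirlingSeq m) = 2 * stirlingSeq (k + m) *
      (((k : ℝ) + m) ^ (k + m) / ((k : ℝ) ^ k * (m : ℝ) ^ m) / √(8 * k * m / (k + m))) := by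
  have hk' : (0 : ℝ) < k := by positivity
  have hm' : (0 : ℝ) < m := by positivity
  have hfac : ((k + m).choose k : ℝ) * (k ! * m !) = (k + m)! := by
    rw [mul_comm (k ! : ℝ), ← mul_assoc, add_comm k m]
    exact_mod_cast Nat.add_choose_mul_factorial_mul_factorial m k
  rw [factorial_eq_stirlingSeq_mul hk, factorial_eq_stirlingSeq_mul hm,
    factorial_eq_stirlingSeq_mul (by omega), Nat.cast_add,
    sqrt_mul_div_pow_add_eq hk' hm' (exp_pos 1)] at hfac
  have hB : 0 < √(2 * k) * (k / exp 1) ^ k * (√(2 * m) * (m / exp 1) ^ m) := by positivity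
  apply mul_right_cancel₀ hB.ne'
  linear_combination hfac

end Stirling

open Stirling in
lemma Nat.add_pow_div_pow_mul_pow_div_sqrt_le_choose {k m : ℕ} (hk : k ≠ 0) (hm : m ≠ 0) :
    ((k : ℝ) + m) ^ (k + m) / ((k : ℝ) ^ k * (m : ℝ) ^ m) / √(8 * k * m / (k + m)) ≤
      (k + m).choose k := by
  rw [← mul_le_mul_iff_of_pos_right (mul_pos (stirlingSeq_pos hk) (stirlingSeq_pos hm)),
    choose_mul_stirlingSeq_mul_stirlingSeq hk hm, mul_comm (2 * _)]
  exact mul_le_mul_of_nonneg_left (stirlingSeq_mul_stirlingSeq_le hk hm) (by positivity)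

/-- Entropy lower bound on binomial coefficients:
`C(n,k) ≥ 2^{n·H(k/n)} / √(8k(1-k/n))` for `0 < k < n`. -/
theorem stmt12 (n k : ℕ) (h0 : 0 < k) (h1 : k < n) :
    (2 : ℝ) ^ ((n : ℝ) * (-((k : ℝ) / n) * Real.logb 2 ((k : ℝ) / n)
        - (1 - (k : ℝ) / n) * Real.logb 2 (1 - (k : ℝ) / n)))
      / Real.sqrt (8 * k * (1 - (k : ℝ) / n))
    ≤ (n.choose k : ℝ) := by
  obtain ⟨m, rfl⟩ := Nat.exists_eq_add_of_le h1.le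
  have hm : m ≠ 0 := by omega
  have hk' : (0 : ℝ) < k := by exact_mod_cast h0
  have hm' : (0 : ℝ) < m := by positivity
  have h8 : 8 * k * (1 - (k : ℝ) / (k + m)) = 8 * k * m / (k + m) := by
    field_simp
    ring
  push_cast
  rw [rpow_mul_entropy_logb two_pos (by norm_num) hk' hm', h8]
  simpa [← Nat.cast_add, rpow_natCast] using
    Nat.add_pow_div_pow_mul_pow_div_sqrt_le_choose h0.ne' hm
end

section
/- Let D₁, ..., D_r and E₁, ..., E_r be probability distributions such that for each i, d_TV(D_i, E_i) ≥ δ > 0. Let D = D₁ × ⋯ × D_r and E = E₁ × ⋯ × E_r be the product distributions. Then d_TV(D, E) ≥ 1 − 2exp(−rδ²/2). -/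
open Finset

lemma prod_sqrt' {ι : Type*} (s : Finset ι) (f : ι → ℝ) (hf : ∀ i ∈ s, 0 ≤ f i) :
    ∏ i ∈ s, Real.sqrt (f i) = Real.sqrt (∏ i ∈ s, f i) := by
  induction s using Finset.cons_induction with
  | empty => simp
  | cons a s ha ih =>
      rw [Finset.prod_cons, Finset.prod_cons, ih (fun i hi => hf i (Finset.mem_cons_of_mem hi)),
        Real.sqrt_mul (hf a (Finset.mem_cons_self a s))]

/-- Bhattacharyya bound: `BC(P,Q) ≤ √(1 - d_TV²)` and `1 - d_TV ≤ BC`. -/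
lemma bc_bounds {β : Type*} [Fintype β] (P Q : β → ℝ)
    (hP : ∀ b, 0 ≤ P b) (hQ : ∀ b, 0 ≤ Q b)
    (hP1 : ∑ b, P b = 1) (hQ1 : ∑ b, Q b = 1) :
    1 - (1/2) * ∑ b, |P b - Q b| ≤ ∑ b, Real.sqrt (P b * Q b) ∧
    ∑ b, Real.sqrt (P b * Q b)
      ≤ Real.sqrt (1 - (1/2) * ∑ b, |P b - Q b|) *
        Real.sqrt (1 + (1/2) * ∑ b, |P b - Q b|) := by
  set d := (1/2) * ∑ b, |P b - Q b| with hd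
  have hmin : ∑ b, min (P b) (Q b) = 1 - d := by
    have : ∀ b : β, min (P b) (Q b) = (P b + Q b - |P b - Q b|) / 2 := by
      intro b; rcases le_total (P b) (Q b) with h | h
      · rw [min_eq_left h, abs_of_nonpos (by linarith)]; ring
      · rw [min_eq_right h, abs_of_nonneg (by linarith)]; ring
    rw [Finset.sum_congr rfl fun b _ => this b, ← Finset.sum_div, Finset.sum_sub_distrib,
      Finset.sum_add_distrib, hP1, hQ1, hd]; ring
  have hmax : ∑ b, max (P b) (Q b) = 1 + d := by
    have : ∀ b : β, max (P b) (Q b) = (P b + Q b + |P b - Q b|) / 2 := by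
      intro b; rcases le_total (P b) (Q b) with h | h
      · rw [max_eq_right h, abs_of_nonpos (by linarith)]; ring
      · rw [max_eq_left h, abs_of_nonneg (by linarith)]; ring
    rw [Finset.sum_congr rfl fun b _ => this b, ← Finset.sum_div,
      Finset.sum_add_distrib, Finset.sum_add_distrib, hP1, hQ1, hd]; ring
  have hsqrt : ∀ b : β, Real.sqrt (P b * Q b)
      = Real.sqrt (min (P b) (Q b)) * Real.sqrt (max (P b) (Q b)) := by
    intro b
    rw [← Real.sqrt_mul (le_min (hP b) (hQ b)), min_mul_max]
  constructor
  · calc 1 - d = ∑ b, min (P b) (Q b) := hmin.symm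
      _ ≤ ∑ b, Real.sqrt (P b * Q b) := by
          apply Finset.sum_le_sum
          intro b _
          have hmn : 0 ≤ min (P b) (Q b) := le_min (hP b) (hQ b)
          have h1 : min (P b) (Q b) * min (P b) (Q b) ≤ P b * Q b := by
            calc min (P b) (Q b) * min (P b) (Q b)
                ≤ min (P b) (Q b) * max (P b) (Q b) :=
                  mul_le_mul_of_nonneg_left min_le_max hmn
              _ = P b * Q b := min_mul_max _ _
          have h2 := Real.sqrt_le_sqrt h1
          rwa [Real.sqrt_mul_self hmn] at h2
  · calc ∑ b, Real.sqrt (P b * Q b)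
        = ∑ b, Real.sqrt (min (P b) (Q b)) * Real.sqrt (max (P b) (Q b)) :=
          Finset.sum_congr rfl fun b _ => hsqrt b
      _ ≤ Real.sqrt (∑ b, min (P b) (Q b)) * Real.sqrt (∑ b, max (P b) (Q b)) :=
          Real.sum_sqrt_mul_sqrt_le _ (fun b => le_min (hP b) (hQ b))
            (fun b => le_trans (hP b) (le_max_left _ _))
      _ = Real.sqrt (1 - d) * Real.sqrt (1 + d) := by rw [hmin, hmax]

/-- If `d_TV(D_i, E_i) ≥ δ` for each of `r` pairs of distributions, then the product
distributions satisfy `d_TV(D, E) ≥ 1 - 2exp(-rδ²/2)`. -/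
theorem stmt19 (r : ℕ) (α : Fin r → Type*) [∀ i, Fintype (α i)]
    (D E : ∀ i, α i → ℝ) (δ : ℝ) (hδ : 0 < δ)
    (hD : ∀ i, (∀ a, 0 ≤ D i a) ∧ ∑ a, D i a = 1)
    (hE : ∀ i, (∀ a, 0 ≤ E i a) ∧ ∑ a, E i a = 1)
    (hfar : ∀ i, δ ≤ (1 / 2) * ∑ a, |D i a - E i a|) :
    1 - 2 * Real.exp (-(r : ℝ) * δ ^ 2 / 2)
      ≤ (1 / 2) * ∑ f : (∀ i, α i), |∏ i, D i (f i) - ∏ i, E i (f i)| := by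
  classical
  -- product distributions
  set F : (∀ i, α i) → ℝ := fun f => ∏ i, D i (f i) with hF
  set G : (∀ i, α i) → ℝ := fun f => ∏ i, E i (f i) with hG
  have hFpos : ∀ f, 0 ≤ F f := fun f => Finset.prod_nonneg fun i _ => (hD i).1 _
  have hGpos : ∀ f, 0 ≤ G f := fun f => Finset.prod_nonneg fun i _ => (hE i).1 _
  have hF1 : ∑ f, F f = 1 := by
    rw [hF, ← Fintype.prod_sum]
    exact Finset.prod_eq_one fun i _ => (hD i).2
  have hG1 : ∑ f, G f = 1 := by
    rw [hG, ← Fintype.prod_sum]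
    exact Finset.prod_eq_one fun i _ => (hE i).2
  -- BC of the product factorizes
  have hBCprod : ∑ f, Real.sqrt (F f * G f)
      = ∏ i, ∑ a, Real.sqrt (D i a * E i a) := by
    rw [Fintype.prod_sum]
    apply Finset.sum_congr rfl
    intro f _
    rw [hF, hG, ← Finset.prod_mul_distrib,
      ← prod_sqrt' _ _ (fun i _ => mul_nonneg ((hD i).1 _) ((hE i).1 _))]
  -- per-coordinate bound: BC_i ≤ exp(-δ²/2)
  have hcoord : ∀ i, ∑ a, Real.sqrt (D i a * E i a) ≤ Real.exp (-(δ ^ 2) / 2) := by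
    intro i
    obtain ⟨hlow, hup⟩ := bc_bounds (D i) (E i) (hD i).1 (hE i).1 (hD i).2 (hE i).2
    set d := (1/2) * ∑ a, |D i a - E i a| with hdd
    have hd1 : d ≤ 1 := by
      have habs : ∑ a, |D i a - E i a| ≤ ∑ a, (D i a + E i a) :=
        Finset.sum_le_sum fun a _ => by
          have := abs_sub (D i a) (E i a)
          rwa [abs_of_nonneg ((hD i).1 a), abs_of_nonneg ((hE i).1 a)] at this
      rw [Finset.sum_add_distrib, (hD i).2, (hE i).2] at habs
      rw [hdd]; linarith
    have hδd : δ ≤ d := hfar i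
    calc ∑ a, Real.sqrt (D i a * E i a)
        ≤ Real.sqrt (1 - d) * Real.sqrt (1 + d) := hup
      _ = Real.sqrt ((1 - d) * (1 + d)) :=
          (Real.sqrt_mul (by linarith) _).symm
      _ ≤ Real.sqrt (1 - δ ^ 2) := by
          apply Real.sqrt_le_sqrt; nlinarith
      _ ≤ Real.sqrt (Real.exp (-(δ ^ 2))) := by
          apply Real.sqrt_le_sqrt
          linarith [Real.add_one_le_exp (-(δ ^ 2))]
      _ = Real.exp (-(δ ^ 2) / 2) := (Real.exp_half _).symm
  -- combine
  have hBCnn : ∀ i, 0 ≤ ∑ a, Real.sqrt (D i a * E i a) := fun i =>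
    Finset.sum_nonneg fun a _ => Real.sqrt_nonneg _
  have hprod : ∏ i, ∑ a, Real.sqrt (D i a * E i a) ≤ Real.exp (-(r : ℝ) * δ ^ 2 / 2) := by
    calc ∏ i, ∑ a, Real.sqrt (D i a * E i a)
        ≤ ∏ _i : Fin r, Real.exp (-(δ ^ 2) / 2) :=
          Finset.prod_le_prod (fun i _ => hBCnn i) (fun i _ => hcoord i)
      _ = Real.exp (-(δ ^ 2) / 2) ^ r := by simp
      _ = Real.exp (-(r : ℝ) * δ ^ 2 / 2) := by
          rw [← Real.exp_nat_mul]; ring_nf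
  obtain ⟨hlow, _⟩ := bc_bounds F G hFpos hGpos hF1 hG1
  have hpos : 0 < Real.exp (-(r : ℝ) * δ ^ 2 / 2) := Real.exp_pos _
  rw [hBCprod] at hlow
  linarith
end
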